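/- (Recurrence for weighted (h,q)-Genocchi numbers) Let q be a real number with 0 < q < 1, let α > 0 be real, and let h be a positive integer. Then G̃_{0,q}^{(α,h)} = 0; moreover q^h · G̃_{1,q}^{(α,h)}(1) + G̃_{1,q}^{(α,h)} = [2]_q, and for every integer m ≥ 1, q^h · G̃_{m+1,q}^{(α,h)}(1)/(m+1) + G̃_{m+1,q}^{(α,h)}/(m+1) = 0. -/

import Mathlib

/-- The `q`-number `[x]_q = (1 - q^x)/(1 - q)` (real exponent, via `rpow`). -/
noncomputable def qnum (q x : ℝ) : ℝ := (1 - q ^ x) / (1 - q)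

/-- The weighted `(h,q)`-Genocchi polynomial
`G̃_{n,q}^{(α,h)}(x) = n·[2]_q·∑_{m≥0} (-1)^m q^{mh} [m+x]_{q^α}^{n-1}`
(for `n = 0` the prefactor `n` makes it `0`; `0^0 = 1` in the natural power). -/
noncomputable def hqGenocchi (q α : ℝ) (h n : ℕ) (x : ℝ) : ℝ :=
  (n : ℝ) * qnum q 2 *
    ∑' m : ℕ, (-1 : ℝ) ^ m * q ^ (m * h) * (qnum (q ^ α) ((m : ℝ) + x)) ^ (n - 1)

/-! Multiplying the alternating series `∑ (-1)^m r^m b(m+1)` by `r` turns it into minus the tail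
`∑_{m ≥ 1} (-1)^m r^m b m`, so with `r = q^h` and `b m = [m]_{q^α}^k` the two Genocchi series
telescope to their `m = 0` term `[0]^k = 0^k`. -/

lemma mul_tsum_alternating_shift_add_tsum (r : ℝ) (b : ℕ → ℝ)
    (hb : Summable fun m => (-1 : ℝ) ^ m * r ^ m * b m) :
    r * ∑' m, (-1 : ℝ) ^ m * r ^ m * b (m + 1) + ∑' m, (-1 : ℝ) ^ m * r ^ m * b m = b 0 := by
  have hshift : r * ∑' m, (-1 : ℝ) ^ m * r ^ m * b (m + 1)
      = -∑' m, (-1 : ℝ) ^ (m + 1) * r ^ (m + 1) * b (m + 1) := by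
    rw [← tsum_mul_left, ← tsum_neg]
    exact tsum_congr fun m => by ring
  rw [hshift, hb.tsum_eq_zero_add]
  simp

lemma summable_alternating_geometric_mul_of_bounded {r C : ℝ} (hr0 : 0 ≤ r) (hr1 : r < 1)
    {b : ℕ → ℝ} (hb : ∀ m, |b m| ≤ C) :
    Summable fun m => (-1 : ℝ) ^ m * r ^ m * b m := by
  refine ((summable_geometric_of_lt_one hr0 hr1).mul_right C).of_norm_bounded fun m => ?_
  rw [Real.norm_eq_abs, abs_mul, abs_mul, abs_pow, abs_neg, abs_one, one_pow, one_mul,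
    abs_pow, abs_of_nonneg hr0]
  exact mul_le_mul_of_nonneg_left (hb m) (pow_nonneg hr0 m)

lemma qnum_zero (Q : ℝ) : qnum Q 0 = 0 := by
  simp [qnum]

lemma qnum_nonneg {Q y : ℝ} (hQ0 : 0 ≤ Q) (hQ1 : Q < 1) (hy : 0 ≤ y) : 0 ≤ qnum Q y :=
  div_nonneg (by linarith [Real.rpow_le_one hQ0 hQ1.le hy]) (by linarith)

lemma qnum_le_inv_one_sub {Q y : ℝ} (hQ0 : 0 ≤ Q) (hQ1 : Q < 1) : qnum Q y ≤ (1 - Q)⁻¹ := by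
  rw [qnum, div_eq_mul_inv]
  exact mul_le_of_le_one_left (inv_nonneg.2 (by linarith)) (by linarith [Real.rpow_nonneg hQ0 y])

lemma hqGenocchi_succ (q α : ℝ) (h k : ℕ) (x : ℝ) :
    hqGenocchi q α h (k + 1) x = ((k : ℝ) + 1) * qnum q 2 *
      ∑' m : ℕ, (-1 : ℝ) ^ m * (q ^ h) ^ m * qnum (q ^ α) ((m : ℝ) + x) ^ k := by
  simp only [hqGenocchi, Nat.add_sub_cancel, Nat.cast_add, Nat.cast_one, ← pow_mul, mul_comm h]

lemma hqGenocchi_shift_add (q α : ℝ) (hq0 : 0 < q) (hq1 : q < 1) (hα : 0 < α)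
    (h : ℕ) (hh : 0 < h) (k : ℕ) :
    q ^ h * hqGenocchi q α h (k + 1) 1 + hqGenocchi q α h (k + 1) 0
      = ((k : ℝ) + 1) * qnum q 2 * (0 : ℝ) ^ k := by
  set Q := q ^ α
  have hQ0 : 0 ≤ Q := Real.rpow_nonneg hq0.le α
  have hQ1 : Q < 1 := Real.rpow_lt_one hq0.le hq1 hα
  have hbound : ∀ m : ℕ, |qnum Q m ^ k| ≤ (1 - Q)⁻¹ ^ k := fun m => by
    have hnn := qnum_nonneg hQ0 hQ1 (Nat.cast_nonneg m)
    rw [abs_of_nonneg (pow_nonneg hnn k)]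
    exact pow_le_pow_left₀ hnn (qnum_le_inv_one_sub hQ0 hQ1) k
  have hsum := mul_tsum_alternating_shift_add_tsum (q ^ h) (fun m => qnum Q m ^ k)
    (summable_alternating_geometric_mul_of_bounded (pow_nonneg hq0.le h)
      (pow_lt_one₀ hq0.le hq1 hh.ne') hbound)
  simp only [Nat.cast_add, Nat.cast_one, Nat.cast_zero, qnum_zero] at hsum
  simp only [hqGenocchi_succ, add_zero]
  linear_combination ((k : ℝ) + 1) * qnum q 2 * hsum

theorem stmt10 (q α : ℝ) (hq0 : 0 < q) (hq1 : q < 1) (hα : 0 < α) (h : ℕ) (hh : 0 < h) :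
    hqGenocchi q α h 0 0 = 0 ∧
    q ^ h * hqGenocchi q α h 1 1 + hqGenocchi q α h 1 0 = qnum q 2 ∧
    ∀ m : ℕ, 1 ≤ m →
      q ^ h * hqGenocchi q α h (m + 1) 1 / ((m : ℝ) + 1) +
        hqGenocchi q α h (m + 1) 0 / ((m : ℝ) + 1) = 0 := by
  refine ⟨by simp [hqGenocchi], ?_, fun m hm => ?_⟩
  · simpa using hqGenocchi_shift_add q α hq0 hq1 hα h hh 0
  · rw [← add_div, hqGenocchi_shift_add q α hq0 hq1 hα h hh m, zero_pow (by omega)]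
    simp
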